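/- Let k and l be positive integers with k > l + 1. For f = ∑_α a_α z^α ∈ ℋ_l and g = ∑_α b_α z^α ∈ ℋ_k, define the Wick product f ◊ g = ∑_α (∑_{β ≤ α} a_β b_{α-β}) z^α. Then f ◊ g ∈ ℋ_k and ‖f ◊ g‖_k ≤ A(k−l) ‖f‖_l ‖g‖_k, where A(k−l) = ∑_{α∈ℓ} (2ℕ)^{(l−k)α} < ∞ (Våge's inequality). -/

import Mathlib

/-- The weight `(2ℕ)^α = ∏_j (2j)^{α_j}` for a finitely supported multi-index `α`. -/
noncomputable def wt (α : ℕ →₀ ℕ) : ℕ :=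
  α.prod fun j a => (2 * (j + 1)) ^ a

/-- Membership in `ℋ_k`: the coefficients are square summable with weight `(2ℕ)^{-kα}`. -/
def memH (k : ℕ) (c : (ℕ →₀ ℕ) → ℂ) : Prop :=
  Summable fun α => ‖c α‖ ^ 2 * ((wt α : ℝ) ^ k)⁻¹

/-- The norm of `ℋ_k`. -/
noncomputable def normK (k : ℕ) (c : (ℕ →₀ ℕ) → ℂ) : ℝ :=
  Real.sqrt (∑' α, ‖c α‖ ^ 2 * ((wt α : ℝ) ^ k)⁻¹)

/-- The Wick product on coefficient functions:
`(f ◊ g)_α = ∑_{β ≤ α} f_β g_{α-β}`. -/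
noncomputable def wick (f g : (ℕ →₀ ℕ) → ℂ) : (ℕ →₀ ℕ) → ℂ :=
  fun α => ∑ β ∈ Finset.Iic α, f β * g (α - β)

/-!
Cauchy–Schwarz with the weights `(2ℕ)^{-(k-l)β}` bounds `|(f ◊ g)_α|² (2ℕ)^{-kα}` by `A(k-l)`
times the `α`-th coefficient of the Cauchy product of the summable families
`|f_β|² (2ℕ)^{-lβ}` and `|g_γ|² (2ℕ)^{-kγ}`; this uses `(2ℕ)^{β+γ} = (2ℕ)^β (2ℕ)^γ`.
Summing over `α` gives `‖f ◊ g‖_k² ≤ A ‖f‖_l² ‖g‖_k²`, and `√A ≤ A` since the `α = 0` term is `1`.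
`A(k-l)` is finite because `∑_α ∏_j r_j^{α_j} ≤ ∏_j (1 - r_j)⁻¹` for the summable sequence
`r_j = (2j)^{-(k-l)}`, `k - l ≥ 2`.
-/

open Finset

lemma wt_zero : wt 0 = 1 := by simp [wt]

lemma wt_add (α β : ℕ →₀ ℕ) : wt (α + β) = wt α * wt β :=
  Finsupp.prod_add_index' (fun _ => pow_zero _) (fun _ _ _ => pow_add _ _ _)

lemma wt_pos (α : ℕ →₀ ℕ) : 0 < wt α :=
  Finset.prod_pos fun _ _ => by positivity

lemma inv_wt_pow_eq_prod (m : ℕ) (α : ℕ →₀ ℕ) :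
    ((wt α : ℝ) ^ m)⁻¹ = α.prod fun j a => (((2 * (j + 1) : ℝ) ^ m)⁻¹) ^ a := by
  rw [wt, Finsupp.prod, Finsupp.prod, Nat.cast_prod, ← prod_pow, ← prod_inv_distrib]
  refine prod_congr rfl fun j _ => ?_
  push_cast
  rw [inv_pow, pow_right_comm]

lemma Finset.sum_finsupp_prod_eq_prod_sum {ι R : Type*} [CommSemiring R]
    (s : Finset ι) (t : ι → Finset ℕ) (F : ι → ℕ → R) :
    ∑ α ∈ s.finsupp t, ∏ j ∈ s, F j (α j) = ∏ j ∈ s, ∑ a ∈ t j, F j a := by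
  classical
  rw [Finset.finsupp, sum_map, prod_sum]
  refine sum_congr rfl fun p _ => ?_
  rw [← prod_attach s]
  refine prod_congr rfl fun j _ => ?_
  simp [Finsupp.indicator_of_mem j.2]

lemma geom_sum_le_exp {x c : ℝ} (hx : 0 ≤ x) (hxc : x ≤ c) (hc : c < 1) (n : ℕ) :
    ∑ i ∈ range n, x ^ i ≤ Real.exp (x / (1 - c)) := by
  have hx1 : 0 < 1 - x := by linarith
  calc ∑ i ∈ range n, x ^ i ≤ x ^ 0 / (1 - x) := by
        rw [range_eq_Ico]; exact geom_sum_Ico_le_of_lt_one hx (by linarith)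
    _ = 1 + x / (1 - x) := by rw [one_add_div hx1.ne', sub_add_cancel, pow_zero]
    _ ≤ 1 + x / (1 - c) := by gcongr
    _ ≤ Real.exp (x / (1 - c)) := by linarith [Real.add_one_le_exp (x / (1 - c))]

theorem summable_finsupp_prod_pow {ι : Type*} {r : ι → ℝ} {c : ℝ} (hr0 : ∀ j, 0 ≤ r j)
    (hrc : ∀ j, r j ≤ c) (hc : c < 1) (hr : Summable r) :
    Summable fun α : ι →₀ ℕ => α.prod fun j a => r j ^ a := by
  classical
  refine summable_of_sum_le (c := Real.exp ((∑' j, r j) / (1 - c)))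
    (fun α => prod_nonneg fun j _ => pow_nonneg (hr0 j) _) fun S => ?_
  set s := S.biUnion Finsupp.support
  set M := S.sup fun α => s.sup α
  have hsupp : ∀ α ∈ S, α.support ⊆ s := fun α hα => subset_biUnion_of_mem _ hα
  have hS : S ⊆ s.finsupp fun _ => range (M + 1) := fun α hα => by
    refine mem_finsupp_iff.2 ⟨hsupp α hα, fun j hj => mem_range.2 (Nat.lt_succ_of_le ?_)⟩
    exact (le_sup (f := α) hj).trans (le_sup (f := fun α : ι →₀ ℕ => s.sup α) hα)
  calc ∑ α ∈ S, α.prod (fun j a => r j ^ a)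
      = ∑ α ∈ S, ∏ j ∈ s, r j ^ α j :=
        sum_congr rfl fun α hα =>
          Finsupp.prod_of_support_subset _ (hsupp α hα) _ fun _ _ => pow_zero _
    _ ≤ ∑ α ∈ s.finsupp fun _ => range (M + 1), ∏ j ∈ s, r j ^ α j :=
        sum_le_sum_of_subset_of_nonneg hS fun α _ _ => prod_nonneg fun j _ => pow_nonneg (hr0 j) _
    _ = ∏ j ∈ s, ∑ a ∈ range (M + 1), r j ^ a := sum_finsupp_prod_eq_prod_sum _ _ _
    _ ≤ ∏ j ∈ s, Real.exp (r j / (1 - c)) :=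
        prod_le_prod (fun j _ => sum_nonneg fun a _ => pow_nonneg (hr0 j) _)
          fun j _ => geom_sum_le_exp (hr0 j) (hrc j) hc _
    _ = Real.exp ((∑ j ∈ s, r j) / (1 - c)) := by rw [← Real.exp_sum, sum_div]
    _ ≤ Real.exp ((∑' j, r j) / (1 - c)) :=
        Real.exp_le_exp.2 <| div_le_div_of_nonneg_right (hr.sum_le_tsum s fun j _ => hr0 j)
          (by linarith)

theorem summable_inv_wt_pow {m : ℕ} (hm : 2 ≤ m) :
    Summable fun α : ℕ →₀ ℕ => ((wt α : ℝ) ^ m)⁻¹ := by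
  have hr : Summable fun j : ℕ => ((2 * (j + 1) : ℝ) ^ m)⁻¹ := by
    refine Summable.of_nonneg_of_le (fun j => by positivity) (fun j => ?_)
      ((summable_nat_add_iff 1).2 (Real.summable_nat_pow_inv.2 (by omega : 1 < m)))
    push_cast
    gcongr
    linarith
  refine (summable_finsupp_prod_pow (c := 1 / 2) (fun j => by positivity) (fun j => ?_)
    (by norm_num) hr).congr fun α => (inv_wt_pow_eq_prod m α).symm
  rw [one_div]
  gcongr
  calc (2 : ℝ) ≤ 2 * (j + 1) := by linarith [j.cast_nonneg (α := ℝ)]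
    _ ≤ (2 * (j + 1)) ^ m := le_self_pow₀ (by linarith [j.cast_nonneg (α := ℝ)]) (by omega)

section Antidiagonal

variable {A : Type*} [AddCommMonoid A] [PartialOrder A] [CanonicallyOrderedAdd A] [Sub A]
  [OrderedSub A] [AddLeftReflectLE A] [LocallyFiniteOrderBot A] [HasAntidiagonal A]

lemma Finset.sum_Iic_eq_sum_antidiagonal {M : Type*} [AddCommMonoid M] (α : A) (F : A → A → M) :
    ∑ β ∈ Iic α, F β (α - β) = ∑ p ∈ antidiagonal α, F p.1 p.2 := by
  refine sum_nbij' (fun β => (β, α - β)) Prod.fst (fun β hβ => ?_) (fun p hp => ?_)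
    (fun _ _ => rfl) (fun p hp => ?_) (fun _ _ => rfl)
  · exact mem_antidiagonal.2 (add_tsub_cancel_of_le (mem_Iic.1 hβ))
  · exact mem_Iic.2 (mem_antidiagonal.1 hp ▸ le_self_add)
  · rw [← mem_antidiagonal.1 hp, add_tsub_cancel_left]

theorem hasSum_sum_Iic_mul {φ ψ : A → ℝ} (hφ0 : 0 ≤ φ) (hψ0 : 0 ≤ ψ)
    (hφ : Summable φ) (hψ : Summable ψ) :
    HasSum (fun α => ∑ β ∈ Iic α, φ β * ψ (α - β)) ((∑' α, φ α) * ∑' α, ψ α) := by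
  have hprod := hφ.mul_of_nonneg hψ hφ0 hψ0
  simp_rw [sum_Iic_eq_sum_antidiagonal _ fun β γ => φ β * ψ γ]
  rw [hφ.tsum_mul_tsum_eq_tsum_sum_antidiagonal hψ hprod]
  exact (summable_sum_mul_antidiagonal_of_summable_mul hprod).hasSum

end Antidiagonal

theorem sq_norm_wick_mul_inv_wt_pow_le (f g : (ℕ →₀ ℕ) → ℂ) (l m : ℕ) (α : ℕ →₀ ℕ) :
    ‖wick f g α‖ ^ 2 * ((wt α : ℝ) ^ (l + m))⁻¹ ≤
      (∑ β ∈ Iic α, ((wt β : ℝ) ^ m)⁻¹) *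
        ∑ β ∈ Iic α, ‖f β‖ ^ 2 * ((wt β : ℝ) ^ l)⁻¹ *
          (‖g (α - β)‖ ^ 2 * ((wt (α - β) : ℝ) ^ (l + m))⁻¹) := by
  have hwt : ∀ β, (0 : ℝ) < wt β := fun β => Nat.cast_pos.2 (wt_pos β)
  have hnorm : ‖wick f g α‖ ≤ ∑ β ∈ Iic α, ‖f β‖ * ‖g (α - β)‖ :=
    (norm_sum_le _ _).trans_eq (by simp_rw [norm_mul])
  have hCS : (∑ β ∈ Iic α, ‖f β‖ * ‖g (α - β)‖) ^ 2 ≤ (∑ β ∈ Iic α, ((wt β : ℝ) ^ m)⁻¹) *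
      ∑ β ∈ Iic α, (wt β : ℝ) ^ m * (‖f β‖ * ‖g (α - β)‖) ^ 2 := by
    refine sum_sq_le_sum_mul_sum_of_sq_le_mul _ (fun β _ => by positivity)
      (fun β _ => by positivity) fun β _ => ?_
    rw [← mul_assoc, inv_mul_cancel₀ (pow_pos (hwt β) m).ne', one_mul]
  calc ‖wick f g α‖ ^ 2 * ((wt α : ℝ) ^ (l + m))⁻¹
      ≤ (∑ β ∈ Iic α, ((wt β : ℝ) ^ m)⁻¹) *
          ∑ β ∈ Iic α, (wt β : ℝ) ^ m * (‖f β‖ * ‖g (α - β)‖) ^ 2 *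
            ((wt α : ℝ) ^ (l + m))⁻¹ := by
        rw [← sum_mul, ← mul_assoc]
        gcongr
        exact (pow_le_pow_left₀ (norm_nonneg _) hnorm 2).trans hCS
    _ = _ := by
        refine congrArg _ (sum_congr rfl fun β hβ => ?_)
        obtain ⟨γ, rfl⟩ := exists_add_of_le (mem_Iic.1 hβ)
        rw [add_tsub_cancel_left, wt_add, Nat.cast_mul]
        have hβ0 := hwt β
        have hγ0 := hwt γ
        field_simp
        ring

theorem stmt2_general (k l : ℕ) (hk : l + 1 < k)
    (f g : (ℕ →₀ ℕ) → ℂ) (hf : memH l f) (hg : memH k g) :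
    (Summable fun α : ℕ →₀ ℕ => ((wt α : ℝ) ^ (k - l))⁻¹) ∧
    memH k (wick f g) ∧
    normK k (wick f g) ≤
      (∑' α : ℕ →₀ ℕ, ((wt α : ℝ) ^ (k - l))⁻¹) * normK l f * normK k g := by
  obtain ⟨m, rfl⟩ : ∃ m, k = l + m := ⟨k - l, by omega⟩
  rw [Nat.add_sub_cancel_left]
  have hA : Summable fun α : ℕ →₀ ℕ => ((wt α : ℝ) ^ m)⁻¹ := summable_inv_wt_pow (by omega)
  set A := ∑' α : ℕ →₀ ℕ, ((wt α : ℝ) ^ m)⁻¹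
  have hA1 : 1 ≤ A := by simpa [wt_zero] using hA.le_tsum 0 fun α _ => by positivity
  have hconv := hasSum_sum_Iic_mul (fun α => by positivity) (fun α => by positivity) hf hg
  have hbound : ∀ α, ‖wick f g α‖ ^ 2 * ((wt α : ℝ) ^ (l + m))⁻¹ ≤
      A * ∑ β ∈ Iic α, ‖f β‖ ^ 2 * ((wt β : ℝ) ^ l)⁻¹ *
        (‖g (α - β)‖ ^ 2 * ((wt (α - β) : ℝ) ^ (l + m))⁻¹) := fun α =>
    (sq_norm_wick_mul_inv_wt_pow_le f g l m α).trans <| by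
      gcongr
      exact hA.sum_le_tsum _ fun β _ => by positivity
  have hmem : memH (l + m) (wick f g) :=
    (hconv.summable.mul_left A).of_nonneg_of_le (fun α => by positivity) hbound
  refine ⟨hA, hmem, ?_⟩
  calc normK (l + m) (wick f g)
      ≤ √(A * ((∑' α, ‖f α‖ ^ 2 * ((wt α : ℝ) ^ l)⁻¹) *
          ∑' α, ‖g α‖ ^ 2 * ((wt α : ℝ) ^ (l + m))⁻¹)) := by
        rw [← hconv.tsum_eq, ← tsum_mul_left]
        exact Real.sqrt_le_sqrt (hmem.tsum_le_tsum hbound (hconv.summable.mul_left A))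
    _ = √A * (normK l f * normK (l + m) g) := by
        rw [normK, normK, Real.sqrt_mul (by positivity),
          Real.sqrt_mul (tsum_nonneg fun α => by positivity)]
    _ ≤ A * normK l f * normK (l + m) g := by
        rw [mul_assoc]
        exact mul_le_mul_of_nonneg_right ((Real.sqrt_le_left (by positivity)).2 (by nlinarith))
          (mul_nonneg (Real.sqrt_nonneg _) (Real.sqrt_nonneg _))

/-- Våge's inequality: for `k > l + 1`, `f ∈ ℋ_l` and `g ∈ ℋ_k`, the Wick product
`f ◊ g` belongs to `ℋ_k` and `‖f ◊ g‖_k ≤ A(k-l) ‖f‖_l ‖g‖_k`, where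
`A(k-l) = ∑_{α} (2ℕ)^{(l-k)α} < ∞`. -/
theorem stmt2 (k l : ℕ) (hl : 0 < l) (hk : l + 1 < k)
    (f g : (ℕ →₀ ℕ) → ℂ) (hf : memH l f) (hg : memH k g) :
    (Summable fun α : ℕ →₀ ℕ => ((wt α : ℝ) ^ (k - l))⁻¹) ∧
    memH k (wick f g) ∧
    normK k (wick f g) ≤
      (∑' α : ℕ →₀ ℕ, ((wt α : ℝ) ^ (k - l))⁻¹) * normK l f * normK k g :=
  stmt2_general k l hk f g hf hg
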